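/- arXiv:2402.14234 — 9 statements merged into one kernel-verified Lean document; each statement's English description precedes it below -/
import Mathlib

section
/- Let n be a primitive non-deficient positive integer with prime factorization n = p₁^{a₁} p₂^{a₂} ⋯ p_k^{a_k} where p₁ < p₂ < ⋯ < p_k are primes. Assume all exponents a_i are even except for exactly one index t for which a_t is odd, and assume (p_t + 2)/2 ≥ p₁ ≥ 11. Then T(n) < log 2 − 11/(50 p₁²). -/
/-!
Write `h(n) = σ(n)/n = ∏ h(p^a)`. Every prime `p ≠ t` has even, hence at least quadratic,
exponent, so `log h(p^a) ≥ log (1 + 1/p + 1/p²) ≥ 1/p + 2/(5p²)`, while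
`log h(t^a) ≥ 1/t - 1/(2t²)`. If `q` is the largest prime factor other than `t`, then `n/q`
is a deficient proper divisor, and comparing `q`-parts gives `h(n) < 2 (1 + 1/(q² + q))`.
Hence `T(n) ≤ log 2 + 1/(q² + q) + 1/(2t²) - (2/5) ∑_{p ≠ t} 1/p²`. As all these `p` are
at most `q`, `∑_{p ≠ t} 1/p² ≥ 1/p₁² + (1/q) ∑_{p ≠ t, p₁} 1/p`, and were the claim false the
last sum would exceed `1/4`, so the squares absorb `1/(q² + q)`. Finally `t ≥ 2p₁ - 2` gives
`1/(2t²) ≤ 9/(50p₁²)`, which leaves the margin `11/(50p₁²)`.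
-/

open Real Finset

/-- `T n` is the sum of the reciprocals of the distinct primes dividing `n`. -/
noncomputable def T (n : ℕ) : ℝ := ∑ p ∈ n.primeFactors, (1 : ℝ) / p

/-- `n` is non-deficient if `σ(n)/n ≥ 2`. -/
def NonDeficient (n : ℕ) : Prop := 2 * n ≤ ArithmeticFunction.sigma 1 n

/-- `n` is primitive non-deficient if it is non-deficient and no proper divisor is
non-deficient. -/
def PrimitiveNonDeficient (n : ℕ) : Prop :=
  NonDeficient n ∧ ∀ d : ℕ, d ∣ n → d ≠ n → ¬ NonDeficient d

open scoped ArithmeticFunction.sigma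

theorem Real.sub_sq_div_two_le_log_one_add {x : ℝ} (hx : 0 ≤ x) :
    x - x ^ 2 / 2 ≤ log (1 + x) := by
  refine le_trans ?_ (le_log_one_add_of_nonneg hx)
  rw [le_div_iff₀ (by positivity)]
  nlinarith [pow_nonneg hx 3]

theorem Real.add_sq_le_log_one_add_add_sq {x : ℝ} (hx0 : 0 ≤ x) (hx : x ≤ 1 / 11) :
    x + 2 / 5 * x ^ 2 ≤ log (1 + x + x ^ 2) := by
  refine le_trans ?_ (add_assoc 1 x _ ▸ sub_sq_div_two_le_log_one_add (by positivity))
  nlinarith [pow_nonneg hx0 3, pow_nonneg hx0 4, mul_nonneg (pow_nonneg hx0 3) (sub_nonneg.2 hx)]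

-- The paper's `h(n) = σ(n)/n`.
noncomputable def abundancy (n : ℕ) : ℝ := (σ 1 n : ℝ) / n

theorem abundancy_nonneg (n : ℕ) : 0 ≤ abundancy n := by
  unfold abundancy; positivity

theorem abundancy_pos {n : ℕ} (hn : n ≠ 0) : 0 < abundancy n :=
  div_pos (by exact_mod_cast ArithmeticFunction.sigma_pos 1 n hn) (by positivity)

theorem abundancy_one : abundancy 1 = 1 := by simp [abundancy]

theorem abundancy_mul {a b : ℕ} (h : a.Coprime b) :
    abundancy (a * b) = abundancy a * abundancy b := by
  simp only [abundancy, ArithmeticFunction.isMultiplicative_sigma.map_mul_of_coprime h,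
    Nat.cast_mul, mul_div_mul_comm]

theorem abundancy_eq_prod {n : ℕ} (hn : n ≠ 0) :
    abundancy n = ∏ p ∈ n.primeFactors, abundancy (p ^ n.factorization p) := by
  rw [Nat.multiplicative_factorization abundancy (fun _ _ => abundancy_mul) abundancy_one hn,
    Nat.prod_factorization_eq_prod_primeFactors]

theorem abundancy_eq_sum_divisors_inv {n : ℕ} (hn : n ≠ 0) :
    abundancy n = ∑ d ∈ n.divisors, (d : ℝ)⁻¹ := by
  rw [abundancy, ArithmeticFunction.sigma_one_apply, ← Nat.sum_div_divisors, Nat.cast_sum,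
    sum_div]
  refine sum_congr rfl fun d hd => ?_
  have hd0 : (d : ℝ) ≠ 0 := by exact_mod_cast (Nat.pos_of_mem_divisors hd).ne'
  rw [Nat.cast_div (Nat.dvd_of_mem_divisors hd) hd0]
  field_simp

theorem abundancy_prime_pow {p : ℕ} (hp : p.Prime) (k : ℕ) :
    abundancy (p ^ k) = ∑ i ∈ range (k + 1), (p : ℝ)⁻¹ ^ i := by
  simp [abundancy_eq_sum_divisors_inv (pow_ne_zero k hp.ne_zero), Nat.divisors_prime_pow hp]

theorem sum_range_inv_pow_le_abundancy_prime_pow {p j k : ℕ} (hp : p.Prime) (hjk : j ≤ k) :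
    ∑ i ∈ range (j + 1), (p : ℝ)⁻¹ ^ i ≤ abundancy (p ^ k) := by
  rw [abundancy_prime_pow hp]
  exact sum_le_sum_of_subset_of_nonneg (range_subset_range.mpr (by omega))
    fun _ _ _ => by positivity

theorem nonDeficient_iff {n : ℕ} (hn : n ≠ 0) : NonDeficient n ↔ 2 ≤ abundancy n := by
  rw [NonDeficient, abundancy, le_div_iff₀ (by positivity)]
  norm_cast

theorem PrimitiveNonDeficient.ne_zero {n : ℕ} (h : PrimitiveNonDeficient n) : n ≠ 0 := by
  rintro rfl
  exact h.2 6 (dvd_zero 6) (by norm_num) (show 2 * 6 ≤ σ 1 6 by decide)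

theorem abundancy_prime_pow_succ_le {q b : ℕ} (hq : q.Prime) (hb : 1 ≤ b) :
    abundancy (q ^ (b + 1)) ≤ abundancy (q ^ b) * (1 + ((q : ℝ) ^ 2 + q)⁻¹) := by
  have hq0 : (0 : ℝ) < q := by exact_mod_cast hq.pos
  have hrec : abundancy (q ^ (b + 1)) = 1 + (q : ℝ)⁻¹ * abundancy (q ^ b) := by
    rw [abundancy_prime_pow hq, abundancy_prime_pow hq, sum_range_succ', mul_sum]
    simp only [pow_succ', pow_zero]
    ring
  have hA : 1 + (q : ℝ)⁻¹ ≤ abundancy (q ^ b) := by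
    simpa [sum_range_succ] using sum_range_inv_pow_le_abundancy_prime_pow hq hb
  have key :
      abundancy (q ^ b) * (1 + ((q : ℝ) ^ 2 + q)⁻¹) -
          (1 + (q : ℝ)⁻¹ * abundancy (q ^ b)) =
        (abundancy (q ^ b) - (1 + (q : ℝ)⁻¹)) / (1 + (q : ℝ)⁻¹) := by
    field_simp
    ring
  rw [hrec, ← sub_nonneg, key]
  exact div_nonneg (sub_nonneg.2 hA) (by positivity)

theorem PrimitiveNonDeficient.abundancy_lt {n q : ℕ} (h : PrimitiveNonDeficient n)
    (hq : q.Prime) (hq2 : 2 ≤ n.factorization q) :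
    abundancy n < 2 * (1 + ((q : ℝ) ^ 2 + q)⁻¹) := by
  have hn := h.ne_zero
  obtain ⟨b, hb⟩ : ∃ b, n.factorization q = b + 1 + 1 := ⟨n.factorization q - 2, by omega⟩
  obtain ⟨r, hr, hnr⟩ : ∃ r, q.Coprime r ∧ q ^ (b + 1 + 1) * r = n :=
    ⟨_, Nat.coprime_ordCompl hq hn, hb ▸ Nat.ordProj_mul_ordCompl_eq_self n q⟩
  have hmn : q ^ (b + 1) * r * q = n := by rw [← hnr]; ring
  have hm : q ^ (b + 1) * r ≠ 0 := by rintro h0; simp [h0, eq_comm, hn] at hmn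
  have hdef : abundancy (q ^ (b + 1) * r) < 2 := by
    refine lt_of_not_ge fun h2 => h.2 _ (Dvd.intro _ hmn) ?_ ((nonDeficient_iff hm).2 h2)
    intro heq
    rw [← heq] at hmn
    exact hq.one_lt.ne' ((Nat.mul_eq_left hm).1 hmn)
  calc abundancy n = abundancy (q ^ (b + 1 + 1)) * abundancy r := by
        rw [← hnr, abundancy_mul (hr.pow_left _)]
    _ ≤ abundancy (q ^ (b + 1)) * (1 + ((q : ℝ) ^ 2 + q)⁻¹) * abundancy r := by
        gcongr
        · exact abundancy_nonneg r
        · exact abundancy_prime_pow_succ_le hq (by omega)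
    _ = abundancy (q ^ (b + 1) * r) * (1 + ((q : ℝ) ^ 2 + q)⁻¹) := by
        rw [abundancy_mul (hr.pow_left _)]; ring
    _ < 2 * (1 + ((q : ℝ) ^ 2 + q)⁻¹) := by gcongr

theorem PrimitiveNonDeficient.log_abundancy_lt {n q : ℕ} (h : PrimitiveNonDeficient n)
    (hq : q.Prime) (hq2 : 2 ≤ n.factorization q) :
    log (abundancy n) < log 2 + ((q : ℝ) ^ 2 + q)⁻¹ := by
  have hw : (0 : ℝ) < 1 + ((q : ℝ) ^ 2 + q)⁻¹ := by positivity
  calc log (abundancy n) < log (2 * (1 + ((q : ℝ) ^ 2 + q)⁻¹)) :=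
        log_lt_log (abundancy_pos h.ne_zero) (h.abundancy_lt hq hq2)
    _ = log 2 + log (1 + ((q : ℝ) ^ 2 + q)⁻¹) := log_mul two_ne_zero hw.ne'
    _ ≤ log 2 + ((q : ℝ) ^ 2 + q)⁻¹ := by linarith [log_le_sub_one_of_pos hw]

theorem inv_sub_le_log_abundancy_prime_pow {p k : ℕ} (hp : p.Prime) (hk : 1 ≤ k) :
    (p : ℝ)⁻¹ - (p : ℝ)⁻¹ ^ 2 / 2 ≤ log (abundancy (p ^ k)) := by
  have h := sum_range_inv_pow_le_abundancy_prime_pow hp hk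
  simp only [sum_range_succ, sum_range_zero, pow_zero, pow_one, zero_add] at h
  exact (sub_sq_div_two_le_log_one_add (by positivity)).trans (log_le_log (by positivity) h)

theorem inv_add_le_log_abundancy_prime_pow {p k : ℕ} (hp : p.Prime) (h11 : 11 ≤ p)
    (hk : 2 ≤ k) : (p : ℝ)⁻¹ + 2 / 5 * (p : ℝ)⁻¹ ^ 2 ≤ log (abundancy (p ^ k)) := by
  have h := sum_range_inv_pow_le_abundancy_prime_pow hp hk
  simp only [sum_range_succ, sum_range_zero, pow_zero, pow_one, zero_add] at h
  have hp11 : (p : ℝ)⁻¹ ≤ 1 / 11 := by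
    rw [one_div]; exact inv_anti₀ (by norm_num) (by exact_mod_cast h11)
  exact (add_sq_le_log_one_add_add_sq (by positivity) hp11).trans
    (log_le_log (by positivity) h)

theorem le_log_abundancy_of_two_le_factorization {n t : ℕ} (hn : n ≠ 0)
    (ht : t ∈ n.primeFactors)
    (h11 : ∀ p ∈ n.primeFactors.erase t, 11 ≤ p)
    (h2 : ∀ p ∈ n.primeFactors.erase t, 2 ≤ n.factorization p) :
    (t : ℝ)⁻¹ - (t : ℝ)⁻¹ ^ 2 / 2 + (∑ p ∈ n.primeFactors.erase t, (p : ℝ)⁻¹ +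
      2 / 5 * ∑ p ∈ n.primeFactors.erase t, (p : ℝ)⁻¹ ^ 2) ≤ log (abundancy n) := by
  rw [abundancy_eq_prod hn, log_prod fun p hp => (abundancy_pos (pow_ne_zero _
    (Nat.prime_of_mem_primeFactors hp).ne_zero)).ne', ← add_sum_erase _ _ ht, mul_sum,
    ← sum_add_distrib]
  have htp := Nat.prime_of_mem_primeFactors ht
  gcongr with p hp
  · exact inv_sub_le_log_abundancy_prime_pow htp
      (htp.factorization_pos_of_dvd hn (Nat.dvd_of_mem_primeFactors ht))
  · exact inv_add_le_log_abundancy_prime_pow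
      (Nat.prime_of_mem_primeFactors (mem_of_mem_erase hp)) (h11 p hp) (h2 p hp)

theorem T_eq_inv_add_sum_erase {n t : ℕ} (ht : t ∈ n.primeFactors) :
    T n = (t : ℝ)⁻¹ + ∑ p ∈ n.primeFactors.erase t, (p : ℝ)⁻¹ := by
  rw [T, ← add_sum_erase _ _ ht]
  simp only [one_div]

theorem inv_sq_add_inv_mul_le_sum_inv_sq {s : Finset ℕ} {x y : ℕ} (hx : x ∈ s)
    (hpos : ∀ p ∈ s, 0 < p) (hy : ∀ p ∈ s, p ≤ y) :
    (x : ℝ)⁻¹ ^ 2 + (y : ℝ)⁻¹ * (∑ p ∈ s, (p : ℝ)⁻¹ - (x : ℝ)⁻¹) ≤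
      ∑ p ∈ s, (p : ℝ)⁻¹ ^ 2 := by
  rw [← add_sum_erase _ _ hx, ← add_sum_erase _ _ hx, add_sub_cancel_left, mul_sum]
  gcongr with p hp
  rw [sq]
  gcongr
  · exact_mod_cast hpos p (mem_of_mem_erase hp)
  · exact hy p (mem_of_mem_erase hp)

theorem inv_add_lt_log_two_sub {X Z Y S Q : ℝ} (hX : 11 ≤ X) (hZ : 2 * X - 2 ≤ Z)
    (hY : 11 ≤ Y)
    (hQ : X⁻¹ ^ 2 + Y⁻¹ * (S - X⁻¹) ≤ Q)
    (hlog : Z⁻¹ - Z⁻¹ ^ 2 / 2 + (S + 2 / 5 * Q) < log 2 + (Y ^ 2 + Y)⁻¹) :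
    Z⁻¹ + S < log 2 - 11 / (50 * X ^ 2) := by
  by_contra! hcon
  -- If the bound failed, `S - X⁻¹ ≥ 1/4`, so `2/5 * Q` absorbs the slack `(Y² + Y)⁻¹`.
  have hX0 : 0 < X := by linarith
  have hY0 : 0 < Y := by linarith
  have hXinv : X⁻¹ ≤ 1 / 11 := by rw [one_div]; exact inv_anti₀ (by norm_num) hX
  have hZinv : Z⁻¹ ≤ 1 / 20 := by rw [one_div]; exact inv_anti₀ (by norm_num) (by linarith)
  have hX2 : 11 / (50 * X ^ 2) = 11 / 50 * X⁻¹ ^ 2 := by field_simp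
  have hS : 1 / 4 ≤ S - X⁻¹ := by
    nlinarith [log_two_gt_d9, mul_le_mul_of_nonneg_left hXinv (inv_nonneg.2 hX0.le)]
  have hYQ : (Y ^ 2 + Y)⁻¹ < Y⁻¹ / 10 := by
    rw [div_eq_mul_inv, ← mul_inv]
    exact inv_strictAnti₀ (by positivity) (by nlinarith)
  have hZX : Z⁻¹ ≤ 3 / 5 * X⁻¹ :=
    calc Z⁻¹ ≤ (5 / 3 * X)⁻¹ := inv_anti₀ (by positivity) (by linarith)
      _ = 3 / 5 * X⁻¹ := by rw [mul_inv]; norm_num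
  nlinarith [mul_le_mul_of_nonneg_left hS (inv_nonneg.2 hY0.le),
    pow_le_pow_left₀ (inv_nonneg.2 (by linarith : (0 : ℝ) ≤ Z)) hZX 2]

theorem stmt_1_general (n : ℕ) (hpnd : PrimitiveNonDeficient n)
    (t : ℕ) (ht : t ∈ n.primeFactors)
    (heven : ∀ p ∈ n.primeFactors, p ≠ t → Even (n.factorization p))
    (hpt : ((t : ℝ) + 2) / 2 ≥ (n.minFac : ℝ)) (hp1 : 11 ≤ n.minFac) :
    T n < Real.log 2 - 11 / (50 * (n.minFac : ℝ) ^ 2) := by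
  have hn := hpnd.ne_zero
  have hprime : ∀ p ∈ n.primeFactors.erase t, p.Prime :=
    fun p hp => Nat.prime_of_mem_primeFactors (mem_of_mem_erase hp)
  have h11 : ∀ p ∈ n.primeFactors.erase t, 11 ≤ p := fun p hp =>
    hp1.trans (Nat.minFac_le_of_dvd (hprime p hp).two_le
      (Nat.dvd_of_mem_primeFactors (mem_of_mem_erase hp)))
  have h2 : ∀ p ∈ n.primeFactors.erase t, 2 ≤ n.factorization p := by
    intro p hp
    obtain ⟨hne, hpn⟩ := mem_erase.1 hp
    obtain ⟨c, hc⟩ := heven p hpn hne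
    have := (hprime p hp).factorization_pos_of_dvd hn (Nat.dvd_of_mem_primeFactors hpn)
    omega
  have hmin : n.minFac ∈ n.primeFactors.erase t := by
    have hn1 : n ≠ 1 := by rintro rfl; simp at hp1
    refine mem_erase.2 ⟨fun h => ?_, Nat.mem_primeFactors.2 ⟨Nat.minFac_prime hn1,
      Nat.minFac_dvd n, hn⟩⟩
    have : (11 : ℝ) ≤ n.minFac := by exact_mod_cast hp1
    rw [h] at hpt this
    linarith
  set q := (n.primeFactors.erase t).max' ⟨_, hmin⟩
  have hq : q ∈ n.primeFactors.erase t := max'_mem _ _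
  rw [T_eq_inv_add_sum_erase ht]
  refine inv_add_lt_log_two_sub (by exact_mod_cast hp1) (by linarith)
    (by exact_mod_cast h11 q hq)
    (inv_sq_add_inv_mul_le_sum_inv_sq hmin (fun p hp => (hprime p hp).pos) (le_max' _))
    ((le_log_abundancy_of_two_le_factorization hn ht h11 h2).trans_lt
      (hpnd.log_abundancy_lt (hprime q hq) (h2 q hq)))

theorem stmt_1 (n : ℕ) (hn : 0 < n) (hpnd : PrimitiveNonDeficient n)
    (t : ℕ) (ht : t ∈ n.primeFactors) (htodd : Odd (n.factorization t))
    (heven : ∀ p ∈ n.primeFactors, p ≠ t → Even (n.factorization p))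
    (hpt : ((t : ℝ) + 2) / 2 ≥ (n.minFac : ℝ)) (hp1 : 11 ≤ n.minFac) :
    T n < Real.log 2 - 11 / (50 * (n.minFac : ℝ) ^ 2) :=
  stmt_1_general n hpnd t ht heven hpt hp1
end

section
/- If n is an odd perfect number with smallest prime factor p₁, then H(n) ≤ 2 + 9/(4 p₁²). -/
/-! Since `σ(n)/n = ∏_{p^a ∥ n} (p/(p-1)) (1 - p^{-(a+1)})`, a perfect number satisfies
`H(n) ∏_p (1 - p^{-(a_p+1)}) = 2`, hence `H(n) (1 - ∑_p p^{-(a_p+1)}) ≤ 2`, so it suffices to bound `∑_p p^{-(a_p+1)}` for odd perfect `n`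
with smallest prime `r`. A prime with `a_p ≥ 2` contributes at most `p⁻³`, and the odd primes
`p > r` contribute at most `1/(4r(r+2))` in total by telescoping. A prime with `a_p = 1` has
`(p+1)/2 ∣ n`, so `p ≥ 2r - 1`; since the even number `p + 1` divides `σ(n) = 2n` and `4 ∤ 2n`,
there is at most one such prime. Altogether the sum is at most `9/(8r²+9)`. -/

open Real Finset

/-- `H n = ∏_{p ∣ n} p/(p-1)` over the distinct prime divisors of `n`. -/
noncomputable def H (n : ℕ) : ℝ := ∏ p ∈ n.primeFactors, (p : ℝ) / ((p : ℝ) - 1)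

lemma one_sub_sum_le_prod_one_sub {ι R : Type*} [CommRing R] [LinearOrder R]
    [IsStrictOrderedRing R] (s : Finset ι) (f : ι → R) (h0 : ∀ i ∈ s, 0 ≤ f i)
    (h1 : ∀ i ∈ s, f i ≤ 1) : 1 - ∑ i ∈ s, f i ≤ ∏ i ∈ s, (1 - f i) := by
  classical
  induction s using Finset.induction with
  | empty => simp
  | insert a s ha ih =>
    rw [sum_insert ha, prod_insert ha]
    simp only [mem_insert, forall_eq_or_imp] at h0 h1
    have hsum : 0 ≤ ∑ i ∈ s, f i := sum_nonneg h0.2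
    have hprod : 0 ≤ ∏ i ∈ s, (1 - f i) := prod_nonneg fun i hi => sub_nonneg.2 (h1.2 i hi)
    nlinarith [ih h0.2 h1.2]

lemma geom_sum_eq_pow_mul_one_sub {K : Type*} [Field K] {x : K} (hx0 : x ≠ 0) (hx1 : x ≠ 1)
    (a : ℕ) : ∑ k ∈ range (a + 1), x ^ k = x ^ a * (x / (x - 1)) * (1 - 1 / x ^ (a + 1)) := by
  have hx1' : x - 1 ≠ 0 := sub_ne_zero.2 hx1
  rw [geom_sum_eq hx1]
  field_simp
  ring

lemma sum_divisors_eq_mul_H_mul_prod {n : ℕ} (hn : n ≠ 0) :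
    (∑ d ∈ n.divisors, (d : ℝ)) =
      n * H n * ∏ p ∈ n.primeFactors, (1 - 1 / (p : ℝ) ^ (n.factorization p + 1)) := by
  have hsum : (∑ d ∈ n.divisors, (d : ℝ)) =
      ∏ p ∈ n.primeFactors, ∑ k ∈ range (n.factorization p + 1), (p : ℝ) ^ k := by
    rw [← Nat.cast_sum, Nat.sum_divisors hn]
    push_cast
    rfl
  have hn' : (n : ℝ) = ∏ p ∈ n.primeFactors, (p : ℝ) ^ n.factorization p := by
    exact_mod_cast Nat.prod_primeFactors_pow_factorization hn
  rw [hsum, hn', H, ← prod_mul_distrib, ← prod_mul_distrib]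
  refine prod_congr rfl fun p hp => ?_
  have hp2 : (2 : ℝ) ≤ p := by exact_mod_cast (Nat.prime_of_mem_primeFactors hp).two_le
  exact geom_sum_eq_pow_mul_one_sub (by linarith) (by linarith) _

lemma H_nonneg (n : ℕ) : 0 ≤ H n :=
  prod_nonneg fun p hp => by
    have hp2 : (2 : ℝ) ≤ p := by exact_mod_cast (Nat.prime_of_mem_primeFactors hp).two_le
    exact div_nonneg (by linarith) (by linarith)

lemma even_geom_sum {p m : ℕ} (hp : Odd p) (hm : Even m) : Even (∑ k ∈ range m, p ^ k) := by
  rw [even_sum_iff_even_card_odd, filter_true_of_mem fun k _ => hp.pow, card_range]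
  exact hm

lemma prod_geom_sum_factorization_dvd_sum_divisors {n : ℕ} (hn : n ≠ 0) {s : Finset ℕ}
    (hs : s ⊆ n.primeFactors) :
    ∏ p ∈ s, ∑ k ∈ range (n.factorization p + 1), p ^ k ∣ ∑ d ∈ n.divisors, d := by
  rw [Nat.sum_divisors hn]
  exact prod_dvd_prod_of_subset _ _ _ hs

lemma three_le_minFac_of_odd {n : ℕ} (hodd : Odd n) (hn1 : n ≠ 1) : 3 ≤ n.minFac := by
  have hprime := Nat.minFac_prime hn1
  have hmin : Odd n.minFac := hodd.of_dvd_nat (Nat.minFac_dvd n)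
  have := hprime.two_le
  obtain ⟨k, hk⟩ := hmin
  omega

lemma one_div_cube_add_le {x : ℝ} (hx : 2 < x) :
    1 / x ^ 3 + 1 / (4 * x * (x + 2)) ≤ 1 / (4 * (x - 2) * x) := by
  have hx0 : 0 < x := by linarith
  rw [div_add_div _ _ (by positivity) (by positivity), div_le_div_iff₀ (by positivity)
    (by nlinarith)]
  nlinarith [pow_pos hx0 3]

lemma sum_one_div_cube_le_of_odd (A : Finset ℕ) {m : ℕ} (hm : 0 < m)
    (hA : ∀ a ∈ A, Odd a ∧ m + 2 ≤ a) :
    ∑ a ∈ A, 1 / (a : ℝ) ^ 3 ≤ 1 / (4 * (m : ℝ) * (m + 2)) := by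
  induction A using Finset.induction_on_min generalizing m with
  | empty => simp only [sum_empty]; positivity
  | insert a s has ih =>
    simp only [mem_insert, forall_eq_or_imp] at hA
    obtain ⟨⟨ha, hma⟩, hs⟩ := hA
    have hs' : ∀ b ∈ s, Odd b ∧ a + 2 ≤ b := fun b hb => by
      obtain ⟨hbodd, -⟩ := hs b hb
      have := has b hb
      obtain ⟨k, rfl⟩ := ha
      obtain ⟨l, rfl⟩ := hbodd
      exact ⟨⟨l, rfl⟩, by omega⟩
    have hmR : (0 : ℝ) < m := by exact_mod_cast hm
    have hmaR : (m : ℝ) + 2 ≤ a := by exact_mod_cast hma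
    rw [sum_insert fun h => lt_irrefl a (has a h)]
    calc 1 / (a : ℝ) ^ 3 + ∑ b ∈ s, 1 / (b : ℝ) ^ 3
        ≤ 1 / (a : ℝ) ^ 3 + 1 / (4 * (a : ℝ) * (a + 2)) := by
          gcongr
          exact ih (by omega) hs'
      _ ≤ 1 / (4 * ((a : ℝ) - 2) * a) := one_div_cube_add_le (by linarith)
      _ ≤ 1 / (4 * (m : ℝ) * (m + 2)) := by
          apply one_div_le_one_div_of_le (by positivity)
          nlinarith

lemma sum_one_div_cube_primeFactors_le {n : ℕ} (hodd : Odd n) :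
    ∑ p ∈ n.primeFactors, 1 / (p : ℝ) ^ 3 ≤
      1 / (n.minFac : ℝ) ^ 3 + 1 / (4 * n.minFac * (n.minFac + 2)) := by
  rcases eq_or_ne n 1 with rfl | hn1
  · simp only [Nat.primeFactors_one, sum_empty, Nat.minFac_one]
    positivity
  have hr := three_le_minFac_of_odd hodd hn1
  have hrP : n.minFac ∈ n.primeFactors :=
    Nat.mem_primeFactors.2 ⟨Nat.minFac_prime hn1, Nat.minFac_dvd n, hodd.pos.ne'⟩
  rw [← add_sum_erase _ _ hrP]
  gcongr
  refine sum_one_div_cube_le_of_odd _ (by omega) fun p hp => ?_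
  obtain ⟨hpr, hp⟩ := mem_erase.1 hp
  have hpodd : Odd p := hodd.of_dvd_nat (Nat.dvd_of_mem_primeFactors hp)
  have hrp : n.minFac ≤ p :=
    Nat.minFac_le_of_dvd (Nat.prime_of_mem_primeFactors hp).two_le (Nat.dvd_of_mem_primeFactors hp)
  obtain ⟨k, hk⟩ := hpodd
  obtain ⟨l, hl⟩ := hodd.of_dvd_nat (Nat.minFac_dvd n)
  exact ⟨⟨k, hk⟩, by omega⟩

lemma one_div_sq_add_one_div_cube_add_le {x : ℝ} (hx : 3 ≤ x) :
    1 / (2 * x - 1) ^ 2 + (1 / x ^ 3 + 1 / (4 * x * (x + 2))) ≤ 9 / (8 * x ^ 2 + 9) := by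
  have hy : 0 ≤ x - 3 := by linarith
  have h2x : 0 < 2 * x - 1 := by linarith
  have hx0 : 0 < x := by linarith
  rw [div_add_div _ _ (by positivity) (by positivity),
    div_add_div _ _ (by positivity) (by positivity), div_le_div_iff₀ (by positivity) (by positivity)]
  nlinarith [pow_nonneg hy 7, pow_nonneg hy 6, pow_nonneg hy 5, pow_nonneg hy 4,
    pow_nonneg hy 3, sq_nonneg (x - 3)]

lemma le_two_add_of_mul_one_sub_le {h s x : ℝ} (hh : 0 ≤ h) (hx : x ≠ 0)
    (hs : s ≤ 9 / (8 * x ^ 2 + 9)) (hhs : h * (1 - s) ≤ 2) : h ≤ 2 + 9 / (4 * x ^ 2) := by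
  have hden : 0 < 8 * x ^ 2 + 9 := by positivity
  have hle : 8 * x ^ 2 / (8 * x ^ 2 + 9) ≤ 1 - s := by
    rw [show 8 * x ^ 2 / (8 * x ^ 2 + 9) = 1 - 9 / (8 * x ^ 2 + 9) by field_simp; ring]
    linarith
  rw [show 2 + 9 / (4 * x ^ 2) = 2 / (8 * x ^ 2 / (8 * x ^ 2 + 9)) by field_simp; ring]
  exact (le_div_iff₀ (by positivity)).2 ((mul_le_mul_of_nonneg_left hle hh).trans hhs)

namespace Nat.Perfect

variable {n : ℕ}

lemma H_mul_prod_eq_two (hperf : n.Perfect) :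
    H n * ∏ p ∈ n.primeFactors, (1 - 1 / (p : ℝ) ^ (n.factorization p + 1)) = 2 := by
  have hn : (n : ℝ) ≠ 0 := by exact_mod_cast hperf.2.ne'
  have hσ := sum_divisors_eq_mul_H_mul_prod hperf.2.ne'
  rw [← Nat.cast_sum, (Nat.perfect_iff_sum_divisors_eq_two_mul hperf.2).1 hperf, Nat.cast_mul,
    Nat.cast_two] at hσ
  rw [mul_assoc] at hσ
  exact mul_left_cancel₀ hn (hσ.symm.trans (mul_comm _ _))

lemma H_mul_one_sub_sum_le_two (hperf : n.Perfect) :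
    H n * (1 - ∑ p ∈ n.primeFactors, 1 / (p : ℝ) ^ (n.factorization p + 1)) ≤ 2 := by
  refine (mul_le_mul_of_nonneg_left (one_sub_sum_le_prod_one_sub _ _ (fun p _ => by positivity)
    fun p hp => ?_) (H_nonneg n)).trans hperf.H_mul_prod_eq_two.le
  have hp1 : (1 : ℝ) ≤ p := by exact_mod_cast (Nat.prime_of_mem_primeFactors hp).one_le
  exact div_le_one_of_le₀ (one_le_pow₀ hp1) (by positivity)

lemma ne_one (hperf : n.Perfect) : n ≠ 1 := by
  rintro rfl
  simp [Nat.Perfect] at hperf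

lemma eq_of_odd_factorization (hodd : Odd n) (hperf : n.Perfect) {p q : ℕ}
    (hp : p ∈ n.primeFactors) (hq : q ∈ n.primeFactors) (hpa : Odd (n.factorization p))
    (hqa : Odd (n.factorization q)) : p = q := by
  by_contra hpq
  have hdvd := prod_geom_sum_factorization_dvd_sum_divisors hperf.2.ne'
    (insert_subset hp (singleton_subset_iff.2 hq))
  rw [prod_pair hpq, (Nat.perfect_iff_sum_divisors_eq_two_mul hperf.2).1 hperf] at hdvd
  have hpe := even_geom_sum (hodd.of_dvd_nat (Nat.dvd_of_mem_primeFactors hp)) hpa.add_one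
  have hqe := even_geom_sum (hodd.of_dvd_nat (Nat.dvd_of_mem_primeFactors hq)) hqa.add_one
  have h4 : 2 * 2 ∣ 2 * n := (mul_dvd_mul hpe.two_dvd hqe.two_dvd).trans hdvd
  obtain ⟨k, rfl⟩ := hodd
  omega

lemma two_mul_minFac_le_add_one (hodd : Odd n) (hperf : n.Perfect) {p : ℕ}
    (hp : p ∈ n.primeFactors) (hp1 : n.factorization p = 1) : 2 * n.minFac ≤ p + 1 := by
  have hdvd := prod_geom_sum_factorization_dvd_sum_divisors hperf.2.ne'
    (singleton_subset_iff.2 hp)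
  rw [prod_singleton, hp1, sum_range_succ, sum_range_one, pow_zero, pow_one,
    (Nat.perfect_iff_sum_divisors_eq_two_mul hperf.2).1 hperf] at hdvd
  have hp2 := (Nat.prime_of_mem_primeFactors hp).two_le
  obtain ⟨u, rfl⟩ := hodd.of_dvd_nat (Nat.dvd_of_mem_primeFactors hp)
  have hu : u + 1 ∣ n := by
    rw [show 1 + (2 * u + 1) = 2 * (u + 1) by ring] at hdvd
    exact (Nat.mul_dvd_mul_iff_left two_pos).1 hdvd
  have := Nat.minFac_le_of_dvd (by omega) hu
  omega

lemma sum_one_div_pow_factorization_le (hodd : Odd n) (hperf : n.Perfect) :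
    ∑ p ∈ n.primeFactors, 1 / (p : ℝ) ^ (n.factorization p + 1) ≤
      1 / (2 * n.minFac - 1 : ℝ) ^ 2 + ∑ p ∈ n.primeFactors, 1 / (p : ℝ) ^ 3 := by
  have hr : (3 : ℝ) ≤ n.minFac := by exact_mod_cast three_le_minFac_of_odd hodd hperf.ne_one
  rw [← sum_filter_add_sum_filter_not n.primeFactors (fun p => n.factorization p = 1)]
  gcongr ?_ + ?_
  · have hcard : #{p ∈ n.primeFactors | n.factorization p = 1} ≤ 1 :=
      card_le_one.2 fun p hp q hq => by
        simp only [mem_filter] at hp hq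
        exact hperf.eq_of_odd_factorization hodd hp.1 hq.1 (by simp [hp.2]) (by simp [hq.2])
    refine (sum_le_card_nsmul _ _ (1 / (2 * n.minFac - 1 : ℝ) ^ 2) fun p hp => ?_).trans ?_
    · simp only [mem_filter] at hp
      have hp' : (2 * n.minFac : ℝ) ≤ p + 1 := by
        exact_mod_cast hperf.two_mul_minFac_le_add_one hodd hp.1 hp.2
      have hpos : (0 : ℝ) < 2 * n.minFac - 1 := by linarith
      rw [hp.2, one_add_one_eq_two]
      gcongr
      linarith
    · rw [nsmul_eq_mul]
      exact mul_le_of_le_one_left (by positivity) (by exact_mod_cast hcard)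
  · refine (sum_le_sum fun p hp => ?_).trans
      (sum_le_sum_of_subset_of_nonneg (filter_subset _ _) fun _ _ _ => by positivity)
    simp only [mem_filter] at hp
    have hpa : n.factorization p ≠ 0 := by
      rw [← Finsupp.mem_support_iff, Nat.support_factorization]
      exact hp.1
    have hp1 : (1 : ℝ) ≤ p := by exact_mod_cast (Nat.prime_of_mem_primeFactors hp.1).one_le
    exact one_div_pow_le_one_div_pow_of_le hp1 (by omega)

end Nat.Perfect

theorem stmt_2 (n : ℕ) (hodd : Odd n) (hperf : Nat.Perfect n) :
    H n ≤ 2 + 9 / (4 * (n.minFac : ℝ) ^ 2) := by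
  have hr : (3 : ℝ) ≤ n.minFac := by exact_mod_cast three_le_minFac_of_odd hodd hperf.ne_one
  refine le_two_add_of_mul_one_sub_le (H_nonneg n) (by positivity) ?_
    hperf.H_mul_one_sub_sum_le_two
  calc ∑ p ∈ n.primeFactors, 1 / (p : ℝ) ^ (n.factorization p + 1)
      ≤ 1 / (2 * n.minFac - 1 : ℝ) ^ 2 + ∑ p ∈ n.primeFactors, 1 / (p : ℝ) ^ 3 :=
        hperf.sum_one_div_pow_factorization_le hodd
    _ ≤ 1 / (2 * n.minFac - 1 : ℝ) ^ 2 +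
          (1 / (n.minFac : ℝ) ^ 3 + 1 / (4 * n.minFac * (n.minFac + 2))) := by
        gcongr
        exact sum_one_div_cube_primeFactors_le hodd
    _ ≤ 9 / (8 * (n.minFac : ℝ) ^ 2 + 9) := one_div_sq_add_one_div_cube_add_le hr
end

section
/- If n is a non-deficient positive integer with exactly k distinct prime factors and smallest prime factor p₁, then p₁ ≤ k. -/
/-!
Each prime power `p ^ a ∥ n` contributes `(1 + p + ⋯ + p ^ a) / p ^ a < p / (p - 1)` to the
abundancy index, so `σ(n)/n < ∏_{p ∣ n} p / (p - 1)`. If the smallest prime factor `m` exceeded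
the number `k` of prime factors, then, as `x ↦ x / (x - 1)` decreases, the product would be at most
`∏_{i < k} (m + i) / (m + i - 1) = (m + k - 1) / (m - 1) ≤ 2`, contradicting `σ(n)/n ≥ 2`.
-/

open Finset

section OrderedField

variable {K : Type*} [Field K] [LinearOrder K] [IsStrictOrderedRing K]

lemma div_sub_one_le_div_sub_one {a b : K} (hb : 1 < b) (hba : b ≤ a) :
    a / (a - 1) ≤ b / (b - 1) := by
  rw [div_le_div_iff₀ (by linarith) (by linarith)]
  linarith

lemma geom_sum_div_pow_lt_div_sub_one {x : K} (hx : 1 < x) (a : ℕ) :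
    (∑ i ∈ range (a + 1), x ^ i) / x ^ a < x / (x - 1) := by
  have hx0 : 0 < x - 1 := by linarith
  calc (∑ i ∈ range (a + 1), x ^ i) / x ^ a = (x ^ (a + 1) - 1) / ((x - 1) * x ^ a) := by
        rw [geom_sum_eq hx.ne', div_div]
    _ < x ^ (a + 1) / ((x - 1) * x ^ a) := by gcongr; linarith
    _ = x / (x - 1) := by field_simp; ring

/-- Equality holds when `S` is the interval `[m, m + #S)`, where the product telescopes. -/
lemma prod_div_sub_one_le {S : Finset ℕ} {m : ℕ} (hm : 2 ≤ m) (hS : ∀ p ∈ S, m ≤ p) :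
    ∏ p ∈ S, (p : K) / (p - 1) ≤ (m + #S - 1) / (m - 1) := by
  have hm' : (1 : K) < m := by exact_mod_cast hm
  induction S using Finset.induction_on_max with
  | empty => simp [div_self (sub_pos.2 hm').ne']
  | insert a s hlt ih =>
    have ha : a ∉ s := fun h => (hlt a h).false
    have hs : ∀ p ∈ s, m ≤ p := fun p hp => hS p (mem_insert_of_mem hp)
    have hcard : m + #s ≤ a := by
      have hsub : s ⊆ Ico m a := fun p hp => mem_Ico.2 ⟨hs p hp, hlt p hp⟩
      have := card_le_card hsub
      rw [Nat.card_Ico] at this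
      have := hS a (mem_insert_self a s)
      omega
    have hcard' : (m : K) + #s ≤ a := by exact_mod_cast hcard
    have hs0 : 0 ≤ ∏ p ∈ s, (p : K) / (p - 1) :=
      prod_nonneg fun p hp => div_nonneg p.cast_nonneg
        (sub_nonneg.2 (Nat.one_le_cast.2 (by linarith [hs p hp])))
    rw [prod_insert ha, card_insert_of_notMem ha]
    calc (a : K) / (a - 1) * ∏ p ∈ s, (p : K) / (p - 1)
        ≤ (m + #s) / (m + #s - 1) * ((m + #s - 1) / (m - 1)) :=
          mul_le_mul (div_sub_one_le_div_sub_one (by linarith) hcard') (ih hs) hs0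
            (div_nonneg (by linarith) (by linarith))
      _ = (m + ↑(#s + 1) - 1) / (m - 1) := by
          rw [div_mul_div_cancel₀ (by linarith)]
          push_cast
          ring

end OrderedField

theorem Nat.abundancyIndex_lt_prod_primeFactors {n : ℕ} (hn : 1 < n) :
    n.abundancyIndex < ∏ p ∈ n.primeFactors, (p : ℚ) / (p - 1) := by
  have hn0 : n ≠ 0 := by omega
  have hfactor : n.abundancyIndex =
      ∏ p ∈ n.primeFactors, (∑ i ∈ range (n.factorization p + 1), (p : ℚ) ^ i) /
        (p : ℚ) ^ n.factorization p := by
    rw [prod_div_distrib, abundancyIndex]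
    congr 1
    · exact_mod_cast sum_divisors hn0
    · conv_lhs => rw [← prod_factorization_pow_eq_self hn0]
      rw [prod_factorization_eq_prod_primeFactors]
      push_cast
      rfl
  rw [hfactor]
  refine prod_lt_prod_of_nonempty (fun p hp => ?_) (fun p hp => ?_) (nonempty_primeFactors.2 hn)
  · have hp0 : (0 : ℚ) < p := by exact_mod_cast (prime_of_mem_primeFactors hp).pos
    exact _root_.div_pos (sum_pos (fun i _ => pow_pos hp0 i) nonempty_range_add_one)
      (by positivity)
  · exact geom_sum_div_pow_lt_div_sub_one
      (by exact_mod_cast (prime_of_mem_primeFactors hp).one_lt) _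

theorem NonDeficient.two_le_abundancyIndex {n : ℕ} (h : NonDeficient n) (hn : 0 < n) :
    2 ≤ n.abundancyIndex := by
  rw [Nat.abundancyIndex, le_div_iff₀ (by exact_mod_cast hn)]
  exact_mod_cast (ArithmeticFunction.sigma_one_apply n ▸ h : 2 * n ≤ ∑ d ∈ n.divisors, d)

theorem stmt_3 (n : ℕ) (hn : 0 < n) (hnd : NonDeficient n) :
    n.minFac ≤ n.primeFactors.card := by
  have hn1 : 1 < n := by
    refine lt_of_le_of_ne hn fun h => ?_
    subst h
    simp [NonDeficient] at hnd
  have hmin : n.minFac.Prime := Nat.minFac_prime hn1.ne'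
  by_contra! hlt
  have hprod := prod_div_sub_one_le (K := ℚ) hmin.two_le fun p hp =>
    Nat.minFac_le_of_dvd (Nat.prime_of_mem_primeFactors hp).two_le (Nat.dvd_of_mem_primeFactors hp)
  have hm : (1 : ℚ) < n.minFac := by exact_mod_cast hmin.one_lt
  have hlt' : (n.primeFactors.card : ℚ) + 1 ≤ n.minFac := by exact_mod_cast hlt
  have hle_two : ((n.minFac + n.primeFactors.card - 1) / (n.minFac - 1) : ℚ) ≤ 2 := by
    rw [div_le_iff₀ (by linarith)]
    linarith
  linarith [hnd.two_le_abundancyIndex hn, Nat.abundancyIndex_lt_prod_primeFactors hn1]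
end

section
/- If x is a real number with 0 ≤ x ≤ 1/11, then 1 + x + x² ≥ e^{x + 2x²/5}, with equality if and only if x = 0. -/
/-!
Bound `exp t` for `0 ≤ t ≤ 1` by its cubic Taylor polynomial with the remainder estimate
`exp t ≤ 1 + t + t²/2 + 2t³/9`. Substituting `t = x + 2x²/5`, the gap between `1 + x + x²` and this
bound is `x²/10` minus terms of order `x³`, which stays positive for `0 < x ≤ 1/11`.
-/

open Real

lemma Real.exp_le_cubic {t : ℝ} (ht0 : 0 ≤ t) (ht1 : t ≤ 1) :
    exp t ≤ 1 + t + t ^ 2 / 2 + 2 * t ^ 3 / 9 := by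
  have h := exp_bound' ht0 ht1 (n := 3) (by norm_num)
  norm_num [Finset.sum_range_succ, Nat.factorial] at h
  linarith

lemma cubic_taylor_lt_of_pos {x t : ℝ} (ht : t = x + 2 * x ^ 2 / 5) (hx0 : 0 < x)
    (hx : x ≤ 1 / 11) : 1 + t + t ^ 2 / 2 + 2 * t ^ 3 / 9 < 1 + x + x ^ 2 := by
  subst ht
  nlinarith [pow_pos hx0 2, pow_pos hx0 3, pow_pos hx0 4, mul_pos (pow_pos hx0 2) hx0]

lemma exp_lt_one_add_add_sq {x : ℝ} (hx0 : 0 < x) (hx : x ≤ 1 / 11) :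
    exp (x + 2 * x ^ 2 / 5) < 1 + x + x ^ 2 :=
  (exp_le_cubic (by positivity) (by nlinarith)).trans_lt (cubic_taylor_lt_of_pos rfl hx0 hx)

theorem stmt_4 (x : ℝ) (hx0 : 0 ≤ x) (hx : x ≤ 1 / 11) :
    1 + x + x ^ 2 ≥ Real.exp (x + 2 * x ^ 2 / 5) ∧
      (1 + x + x ^ 2 = Real.exp (x + 2 * x ^ 2 / 5) ↔ x = 0) := by
  rcases hx0.eq_or_lt with rfl | hpos
  · norm_num
  · have hlt := exp_lt_one_add_add_sq hpos hx
    exact ⟨hlt.le, ⟨fun h => absurd h hlt.ne', fun h => absurd h hpos.ne'⟩⟩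
end

section
/- If x is an integer with x ≥ 2, then log(1 + 1/(x−1)) ≤ 1/x + 25/(32 x²). -/
/-!
With `t = 1 / x` we have `log (1 + 1 / (x - 1)) = -log (1 - t) = t + t ^ 2 / 2 + t ^ 3 / 3 + ⋯`.
For `t ≤ 1 / 3` the Taylor series truncated after the cubic term, with the remainder bound
`t ^ 4 / (1 - t)`, already gives the claim; the remaining case `x = 2` is the numerical
inequality `log 2 ≤ 89 / 128`.
-/

open Real Finset

lemma neg_log_one_sub_le_four_terms {t : ℝ} (ht₀ : 0 ≤ t) (ht₁ : t < 1) :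
    -log (1 - t) ≤ t + t ^ 2 / 2 + t ^ 3 / 3 + t ^ 4 / (1 - t) := by
  have h := abs_log_sub_add_sum_range_le (x := t) (by rwa [abs_of_nonneg ht₀]) 3
  rw [abs_of_nonneg ht₀] at h
  simp only [sum_range_succ, sum_range_zero] at h
  norm_num at h
  linarith [(abs_le.mp h).1]

lemma neg_log_one_sub_le_of_le_one_third {t : ℝ} (ht₀ : 0 ≤ t) (ht : t ≤ 1 / 3) :
    -log (1 - t) ≤ t + 25 / 32 * t ^ 2 := by
  have hremainder : t ^ 4 / (1 - t) ≤ 3 / 2 * t ^ 4 := by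
    rw [div_le_iff₀ (by linarith)]
    nlinarith [pow_nonneg ht₀ 4]
  have ht3 : t ^ 3 ≤ t ^ 2 / 3 := by nlinarith [sq_nonneg t]
  have ht4 : t ^ 4 ≤ t ^ 2 / 9 := by nlinarith [sq_nonneg t]
  linarith [neg_log_one_sub_le_four_terms ht₀ (by linarith), sq_nonneg t]

theorem stmt_8 (x : ℤ) (hx : 2 ≤ x) :
    Real.log (1 + 1 / ((x : ℝ) - 1)) ≤ 1 / (x : ℝ) + 25 / (32 * (x : ℝ) ^ 2) := by
  have hxR : (2 : ℝ) ≤ x := by exact_mod_cast hx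
  have hx₀ : (x : ℝ) ≠ 0 := by positivity
  have hx₁ : (x : ℝ) - 1 ≠ 0 := by linarith
  have hrewrite : 1 + 1 / ((x : ℝ) - 1) = (1 - 1 / (x : ℝ))⁻¹ := by
    field_simp
    ring
  rw [hrewrite, log_inv]
  rcases hx.eq_or_lt with rfl | hx₃
  · have hhalf : (1 : ℝ) - 1 / ((2 : ℤ) : ℝ) = 2⁻¹ := by norm_num
    rw [hhalf, log_inv, neg_neg]
    norm_num
    linarith [log_two_lt_d9]
  · have hxR₃ : (3 : ℝ) ≤ x := by exact_mod_cast hx₃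
    have h := neg_log_one_sub_le_of_le_one_third (t := 1 / (x : ℝ)) (by positivity)
      (by rw [div_le_div_iff₀] <;> linarith)
    convert h using 2
    field_simp
end

section
/- There exists a constant C > 0 such that for every primitive non-deficient positive integer n with smallest prime factor p₁, one has H(n) ≤ 2 + C/p₁. -/
open Real Finset

/-!
Let `p` be the least prime factor of `n`. As `σ` is submultiplicative, `σ(n) ≤ (p + 1) σ(n / p)`,
and `n / p` is deficient by primitivity, so `h(n) < 2 (p + 1) / p`. On the other hand
`σ(q^a) / q^a ≥ (q + 1) / q` for every prime power `q^a ∥ n`, whence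
`H(n) ≤ h(n) ∏_{q ∣ n} q² / (q² - 1)`; all these `q` are at least `p`, and
`∏_{k ≥ p} k² / (k² - 1) = p / (p - 1)` telescopes. Hence `H(n) ≤ 2 (p + 1) / (p - 1) ≤ 2 + 8 / p`.
-/

open ArithmeticFunction
open scoped ArithmeticFunction.sigma

theorem sigma_one_mul_le (a b : ℕ) : σ 1 (a * b) ≤ σ 1 a * σ 1 b := by
  simp only [sigma_one_apply, Nat.divisors_mul, Finset.mul_def, sum_mul_sum,
    ← sum_product']
  exact sum_image_le_of_nonneg fun _ _ => Nat.zero_le _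

theorem prod_Ico_sq_div_sq_sub_one {N M : ℕ} (hN : 2 ≤ N) (hNM : N ≤ M) :
    ∏ k ∈ Ico N M, (k : ℝ) ^ 2 / ((k : ℝ) ^ 2 - 1) = (N : ℝ) * (M - 1) / ((N - 1) * M) := by
  have hN' : (2 : ℝ) ≤ N := by exact_mod_cast hN
  induction M, hNM using Nat.le_induction with
  | base =>
    rw [Ico_self, prod_empty, eq_comm, div_eq_one_iff_eq (by nlinarith), mul_comm]
  | succ M hNM ih =>
    have hM : (2 : ℝ) ≤ M := by exact_mod_cast hN.trans hNM
    have : (M : ℝ) ^ 2 - 1 ≠ 0 := by nlinarith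
    rw [prod_Ico_succ_top hNM, ih, Nat.cast_succ]
    field_simp
    ring

theorem prod_sq_div_sq_sub_one_le {S : Finset ℕ} {N : ℕ} (hN : 2 ≤ N) (hS : ∀ k ∈ S, N ≤ k) :
    ∏ k ∈ S, (k : ℝ) ^ 2 / ((k : ℝ) ^ 2 - 1) ≤ (N : ℝ) / (N - 1) := by
  have hN' : (2 : ℝ) ≤ N := by exact_mod_cast hN
  have one_le : ∀ k, N ≤ k → 1 ≤ (k : ℝ) ^ 2 / ((k : ℝ) ^ 2 - 1) := fun k hk => by
    have : (2 : ℝ) ≤ k := by exact_mod_cast hN.trans hk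
    rw [one_le_div (by nlinarith)]; linarith
  set M := N + S.sup id
  have hNM : N ≤ M := Nat.le_add_right _ _
  have hSM : S ⊆ Ico N M := fun k hk => mem_Ico.2 ⟨hS k hk, by
    have := le_sup (f := id) hk; simp only [id] at this; omega⟩
  have hM : (2 : ℝ) ≤ M := by exact_mod_cast hN.trans hNM
  calc ∏ k ∈ S, (k : ℝ) ^ 2 / ((k : ℝ) ^ 2 - 1)
      ≤ ∏ k ∈ Ico N M, (k : ℝ) ^ 2 / ((k : ℝ) ^ 2 - 1) :=
        prod_le_prod_of_subset_of_one_le hSM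
          (fun k hk => zero_le_one.trans (one_le k (hS k hk)))
          (fun k hk _ => one_le k (mem_Ico.1 hk).1)
    _ = (N : ℝ) * (M - 1) / ((N - 1) * M) := prod_Ico_sq_div_sq_sub_one hN hNM
    _ ≤ (N : ℝ) / (N - 1) := by
        rw [div_le_div_iff₀ (by nlinarith) (by linarith)]
        nlinarith

theorem pow_mul_succ_le_mul_sigma {p a : ℕ} (hp : p.Prime) (ha : a ≠ 0) :
    p ^ a * (p + 1) ≤ p * σ 1 (p ^ a) := by
  obtain ⟨b, rfl⟩ : ∃ b, a = b + 1 := ⟨a - 1, by omega⟩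
  rw [sigma_one_apply_prime_pow hp, sum_range_succ, sum_range_succ]
  have : p ^ (b + 1) * (p + 1) = p * (p ^ b + p ^ (b + 1)) := by ring
  rw [this]
  exact Nat.mul_le_mul_left _ (by omega)

theorem div_sub_one_le_sigma_div_mul {p a : ℕ} (hp : p.Prime) (ha : a ≠ 0) :
    (p : ℝ) / (p - 1) ≤ (σ 1 (p ^ a) : ℝ) / p ^ a * (p ^ 2 / (p ^ 2 - 1)) := by
  have hp2 : (2 : ℝ) ≤ p := by exact_mod_cast hp.two_le
  have hσ : (p : ℝ) ^ a * (p + 1) ≤ p * σ 1 (p ^ a) := by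
    exact_mod_cast pow_mul_succ_le_mul_sigma hp ha
  have hfactor : (p : ℝ) / (p - 1) = (p + 1) / p * (p ^ 2 / (p ^ 2 - 1)) := by
    have : (p : ℝ) ^ 2 - 1 = (p - 1) * (p + 1) := by ring
    rw [this]
    field_simp
  rw [hfactor]
  refine mul_le_mul_of_nonneg_right ?_ (div_nonneg (by positivity) (by nlinarith))
  rw [div_le_div_iff₀ (by positivity) (by positivity)]
  linarith

theorem H_le_sigma_div_mul {n : ℕ} (hn : 2 ≤ n) :
    H n ≤ (σ 1 n : ℝ) / n * (n.minFac / (n.minFac - 1)) := by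
  have hn0 : n ≠ 0 := by omega
  have hσ : (σ 1 n : ℝ) = ∏ p ∈ n.primeFactors, (σ 1 (p ^ n.factorization p) : ℝ) := by
    rw [isMultiplicative_sigma.multiplicative_factorization _ hn0, Finsupp.prod,
      Nat.support_factorization, Nat.cast_prod]
  have hnprod : (n : ℝ) = ∏ p ∈ n.primeFactors, (p : ℝ) ^ n.factorization p := by
    exact_mod_cast Nat.prod_primeFactors_pow_factorization hn0
  calc H n
      ≤ ∏ p ∈ n.primeFactors, ((σ 1 (p ^ n.factorization p) : ℝ) / p ^ n.factorization p *
          (p ^ 2 / (p ^ 2 - 1))) := by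
        refine prod_le_prod (fun p hp => ?_) (fun p hp => ?_)
        · have : (2 : ℝ) ≤ p := by exact_mod_cast (Nat.prime_of_mem_primeFactors hp).two_le
          exact div_nonneg (by positivity) (by linarith)
        · exact div_sub_one_le_sigma_div_mul (Nat.prime_of_mem_primeFactors hp)
            (Finsupp.mem_support_iff.1 (by rwa [Nat.support_factorization]))
    _ = (σ 1 n : ℝ) / n * ∏ p ∈ n.primeFactors, (p : ℝ) ^ 2 / (p ^ 2 - 1) := by
        rw [prod_mul_distrib, prod_div_distrib, hσ, hnprod]
    _ ≤ (σ 1 n : ℝ) / n * (n.minFac / (n.minFac - 1)) := by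
        gcongr
        exact prod_sq_div_sq_sub_one_le (Nat.minFac_prime (by omega)).two_le
          fun p hp => Nat.minFac_le_of_dvd (Nat.prime_of_mem_primeFactors hp).two_le
            (Nat.dvd_of_mem_primeFactors hp)

theorem not_nonDeficient_one : ¬ NonDeficient 1 := by
  simp [NonDeficient]

theorem PrimitiveNonDeficient.mul_sigma_lt {n p : ℕ} (h : PrimitiveNonDeficient n) (hn : 0 < n)
    (hp : p.Prime) (hpn : p ∣ n) : p * σ 1 n < 2 * (p + 1) * n := by
  obtain ⟨m, rfl⟩ := hpn
  have hm : σ 1 m < 2 * m := by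
    have hmn : m ≠ p * m := by
      have := hp.two_le
      have : 0 < m := Nat.pos_of_mul_pos_left hn
      nlinarith
    simpa [NonDeficient] using h.2 m (dvd_mul_left m p) hmn
  have hσp : σ 1 p = p + 1 := by rw [sigma_one_apply, hp.sum_divisors]
  calc p * σ 1 (p * m) ≤ p * (p + 1) * σ 1 m := by
        rw [mul_assoc, ← hσp]; exact Nat.mul_le_mul_left _ (sigma_one_mul_le p m)
    _ < p * (p + 1) * (2 * m) := Nat.mul_lt_mul_of_pos_left hm (by positivity [hp.pos])
    _ = 2 * (p + 1) * (p * m) := by ring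

theorem stmt_14 :
    ∃ C : ℝ, 0 < C ∧ ∀ n : ℕ, 0 < n → PrimitiveNonDeficient n →
      H n ≤ 2 + C / (n.minFac : ℝ) := by
  refine ⟨8, by norm_num, fun n hn hprim => ?_⟩
  have hn1 : n ≠ 1 := by
    rintro rfl
    exact not_nonDeficient_one hprim.1
  have hp : n.minFac.Prime := Nat.minFac_prime hn1
  set p := n.minFac
  have hp2 : (2 : ℝ) ≤ p := by exact_mod_cast hp.two_le
  have habund : (σ 1 n : ℝ) / n ≤ 2 * (p + 1) / p := by
    rw [div_le_div_iff₀ (by positivity) (by positivity)]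
    exact_mod_cast (hprim.mul_sigma_lt hn hp n.minFac_dvd).le.trans_eq' (by ring)
  calc H n ≤ (σ 1 n : ℝ) / n * (p / (p - 1)) := H_le_sigma_div_mul (by omega)
    _ ≤ 2 * (p + 1) / p * (p / (p - 1)) := by
        gcongr
        exact div_nonneg (by positivity) (by linarith)
    _ ≤ 2 + 8 / p := by
        rw [div_mul_div_cancel₀ (by positivity), div_le_iff₀ (by linarith)]
        have : 4 ≤ 8 / (p : ℝ) * (p - 1) := by
          rw [div_mul_eq_mul_div, le_div_iff₀ (by positivity)]
          linarith
        linarith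
end

section
/- If n is an odd perfect number and 165 divides n, then 5 exactly divides n (that is, 5 ∣ n but 5² ∤ n). -/
/-- Key sub-multiplicativity: for `d ∣ n = d * k`, `σ(d) * k ≤ σ(n)`. -/
lemma sigma_mul_le_aux (d k : ℕ) (hk : 0 < k) :
    (∑ e ∈ Nat.divisors d, e) * k ≤ ∑ e ∈ Nat.divisors (d * k), e := by
  rcases Nat.eq_zero_or_pos d with rfl | hd
  · simp
  have hinj : ∀ x ∈ d.divisors, ∀ y ∈ d.divisors, x * k = y * k → x = y := by
    intro x _ y _ h
    exact Nat.eq_of_mul_eq_mul_right hk h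
  calc (∑ e ∈ Nat.divisors d, e) * k = ∑ e ∈ d.divisors, e * k := by
        rw [Finset.sum_mul]
    _ = ∑ e ∈ d.divisors.image (· * k), e := by rw [Finset.sum_image hinj]
    _ ≤ ∑ e ∈ (d * k).divisors, e := by
        apply Finset.sum_le_sum_of_subset
        intro x hx
        simp only [Finset.mem_image] at hx
        obtain ⟨e, he, rfl⟩ := hx
        rw [Nat.mem_divisors] at he ⊢
        exact ⟨Nat.mul_dvd_mul he.1 dvd_rfl, by positivity⟩

/-- If `d ∣ n`, `n` perfect and `σ(d) > 2 * d`, contradiction. -/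
lemma abundant_dvd_not_perfect {d n : ℕ} (hd : d ∣ n) (hn : 0 < n)
    (habund : 2 * d < ∑ e ∈ Nat.divisors d, e) (hperf : Nat.Perfect n) : False := by
  obtain ⟨k, rfl⟩ := hd
  have hk : 0 < k := Nat.pos_of_ne_zero (by rintro rfl; simp at hn)
  have h1 : (∑ e ∈ Nat.divisors d, e) * k ≤ ∑ e ∈ Nat.divisors (d * k), e :=
    sigma_mul_le_aux d k hk
  have h2 : ∑ e ∈ Nat.divisors (d * k), e = 2 * (d * k) :=
    (Nat.perfect_iff_sum_divisors_eq_two_mul hn).mp hperf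
  nlinarith [habund, hk]

theorem stmt_15 (n : ℕ) (hodd : Odd n) (hperf : Nat.Perfect n) (h165 : 165 ∣ n) :
    5 ∣ n ∧ ¬ (5 ^ 2 ∣ n) := by
  have hn : 0 < n := hperf.2
  have h5 : 5 ∣ n := dvd_trans ⟨33, rfl⟩ h165
  have h11 : 11 ∣ n := dvd_trans ⟨15, rfl⟩ h165
  have h3 : 3 ∣ n := dvd_trans ⟨55, rfl⟩ h165
  refine ⟨h5, fun h25 => ?_⟩
  have h25' : 25 ∣ n := by norm_num at h25; exact h25
  by_cases h27 : 27 ∣ n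
  · -- 27 * 25 * 11 = 7425 divides n, σ(7425) = 40*31*12 = 14880 > 14850
    have hd : 7425 ∣ n := by
      have h675 : 675 ∣ n := (Nat.Coprime.mul_dvd_of_dvd_of_dvd (by decide) h27 h25')
      have : (675 : ℕ).Coprime 11 := by decide
      have := Nat.Coprime.mul_dvd_of_dvd_of_dvd this h675 h11
      exact this
    refine abundant_dvd_not_perfect hd hn ?_ hperf
    have e1 : (7425 : ℕ) = 675 * 11 := by norm_num
    have e2 : (675 : ℕ) = 27 * 25 := by norm_num
    rw [e1, Nat.Coprime.sum_divisors_mul (by decide), e2,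
      Nat.Coprime.sum_divisors_mul (by decide)]
    have s27 : ∑ e ∈ Nat.divisors 27, e = 40 := by decide
    have s25 : ∑ e ∈ Nat.divisors 25, e = 31 := by decide
    have s11 : ∑ e ∈ Nat.divisors 11, e = 12 := by decide
    rw [s27, s25, s11]; norm_num
  · by_cases h9 : 9 ∣ n
    · -- 9 ‖ n, so σ(9) = 13 divides σ(n) = 2n, hence 13 ∣ n
      obtain ⟨m, rfl⟩ := h9
      have hm3 : ¬ 3 ∣ m := fun ⟨t, ht⟩ => h27 ⟨t, by omega⟩
      have hcop : Nat.Coprime 9 m := by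
        have := Nat.Coprime.pow_left 2 ((Nat.Prime.coprime_iff_not_dvd
          (p := 3) (by norm_num)).mpr hm3)
        norm_num at this
        exact this
      have hσ : ∑ e ∈ Nat.divisors (9 * m), e = 13 * ∑ e ∈ Nat.divisors m, e := by
        rw [Nat.Coprime.sum_divisors_mul hcop]
        have : ∑ e ∈ Nat.divisors 9, e = 13 := by decide
        rw [this]
      have h2n : ∑ e ∈ Nat.divisors (9 * m), e = 2 * (9 * m) :=
        (Nat.perfect_iff_sum_divisors_eq_two_mul hn).mp hperf
      have h13 : 13 ∣ 2 * (9 * m) := by rw [← h2n, hσ]; exact ⟨_, rfl⟩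
      have h13n : 13 ∣ 9 * m := by
        rcases (Nat.Prime.dvd_mul (by norm_num)).mp h13 with h | h
        · omega
        · exact h
      -- 9 * 25 * 11 * 13 = 32175 divides n, σ = 13*31*12*14 = 67704 > 64350
      have hd : 32175 ∣ 9 * m := by
        have h225 : 225 ∣ 9 * m := Nat.Coprime.mul_dvd_of_dvd_of_dvd (by decide) ⟨m, rfl⟩ h25'
        have h2475 : 2475 ∣ 9 * m := Nat.Coprime.mul_dvd_of_dvd_of_dvd (by decide) h225 h11
        have := Nat.Coprime.mul_dvd_of_dvd_of_dvd (show Nat.Coprime 2475 13 by decide) h2475 h13n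
        exact this
      refine abundant_dvd_not_perfect hd hn ?_ hperf
      have e1 : (32175 : ℕ) = 2475 * 13 := by norm_num
      have e2 : (2475 : ℕ) = 225 * 11 := by norm_num
      have e3 : (225 : ℕ) = 9 * 25 := by norm_num
      rw [e1, Nat.Coprime.sum_divisors_mul (by decide), e2,
        Nat.Coprime.sum_divisors_mul (by decide), e3,
        Nat.Coprime.sum_divisors_mul (by decide)]
      have s9 : ∑ e ∈ Nat.divisors 9, e = 13 := by decide
      have s25 : ∑ e ∈ Nat.divisors 25, e = 31 := by decide
      have s11 : ∑ e ∈ Nat.divisors 11, e = 12 := by decide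
      have s13 : ∑ e ∈ Nat.divisors 13, e = 14 := by decide
      rw [s9, s25, s11, s13]; norm_num
    · -- 3 ‖ n, so σ(3) = 4 divides 2n, so n even: contradiction
      obtain ⟨m, rfl⟩ := h3
      have hm3 : ¬ 3 ∣ m := fun ⟨t, ht⟩ => h9 ⟨t, by omega⟩
      have hcop : Nat.Coprime 3 m := (Nat.Prime.coprime_iff_not_dvd (by norm_num)).mpr hm3
      have hσ : ∑ e ∈ Nat.divisors (3 * m), e = 4 * ∑ e ∈ Nat.divisors m, e := by
        rw [Nat.Coprime.sum_divisors_mul hcop]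
        have : ∑ e ∈ Nat.divisors 3, e = 4 := by decide
        rw [this]
      have h2n : ∑ e ∈ Nat.divisors (3 * m), e = 2 * (3 * m) :=
        (Nat.perfect_iff_sum_divisors_eq_two_mul hn).mp hperf
      have hkey : 2 * (3 * m) = 4 * ∑ e ∈ Nat.divisors m, e := by rw [← hσ, h2n]
      obtain ⟨j, hj⟩ := hodd
      generalize (∑ e ∈ Nat.divisors m, e) = S at hkey
      clear * - hkey hj
      omega
end

section
/- If q is a prime with q ≡ −1 (mod 165), then q is not the special prime of any odd perfect number; that is, there is no odd perfect number n = q^e m² with q prime, gcd(q, m) = 1, and q ≡ e ≡ 1 (mod 4). -/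
/-!
Since `e` is odd, `q + 1 ∣ σ(q^e) ∣ σ(n) = 2n`, so each of `3, 5, 11` divides `n`, hence
`m` (none of them divides `q`), and `3²·5²·11² ∣ n`. Either `3² ∣ m`, so `3⁴ ∣ n`, or `3`
exactly divides `m`; then `3²` is a unitary divisor of `n`, so `σ(3²) = 13` divides
`σ(n) = 2n` and `13 ∣ n`. In both cases `n` has an abundant divisor (`3⁴·5²·11²` or
`3²·5²·11²·13`), which a perfect number cannot have.
-/

open ArithmeticFunction Finset
open scoped ArithmeticFunction.sigma

theorem add_one_dvd_geom_sum_of_even {R : Type*} [CommSemiring R] (x : R) {n : ℕ}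
    (hn : Even n) : x + 1 ∣ ∑ i ∈ range n, x ^ i := by
  obtain ⟨k, rfl⟩ := hn
  induction k with
  | zero => simp
  | succ k ih =>
    rw [show k + 1 + (k + 1) = k + k + 1 + 1 by ring, sum_range_succ, sum_range_succ, add_assoc]
    exact dvd_add ih ⟨x ^ (k + k), by ring⟩

theorem add_one_dvd_sigma_one_prime_pow {q e : ℕ} (hq : q.Prime) (he : Odd e) :
    q + 1 ∣ σ 1 (q ^ e) := by
  rw [sigma_one_apply_prime_pow hq]
  exact add_one_dvd_geom_sum_of_even q he.add_one

theorem odd_sigma_one_prime_sq {p : ℕ} (hp : p.Prime) : Odd (σ 1 (p ^ 2)) := by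
  have h : σ 1 (p ^ 2) = p * (p + 1) + 1 := by
    rw [sigma_one_apply_prime_pow hp]
    simp only [sum_range_succ, sum_range_zero]
    ring
  exact h ▸ (Nat.even_mul_succ_self p).add_one

theorem sigma_one_dvd_sigma_one_mul {a b : ℕ} (h : a.Coprime b) : σ 1 a ∣ σ 1 (a * b) :=
  isMultiplicative_sigma.map_mul_of_coprime h ▸ dvd_mul_right _ _

theorem Nat.Perfect.sigma_one_eq_two_mul {n : ℕ} (h : n.Perfect) : σ 1 n = 2 * n := by
  rw [sigma_one_apply, ← Nat.perfect_iff_sum_divisors_eq_two_mul h.2]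
  exact h

theorem Nat.Perfect.dvd_of_dvd_sigma_one {n d : ℕ} (h : n.Perfect) (hd : Odd d)
    (hdvd : d ∣ σ 1 n) : d ∣ n :=
  hd.coprime_two_right.dvd_of_dvd_mul_left (h.sigma_one_eq_two_mul ▸ hdvd)

theorem Nat.Abundant.not_dvd_of_perfect {d n : ℕ} (hd : d.Abundant) (h : n.Perfect) :
    ¬ d ∣ n := fun hdn ↦
  ((Nat.perfect_iff_not_abundant_and_not_deficient h.2.ne).mp h).1 (hd.of_dvd hdn h.2.ne')

theorem abundant_three_pow_four_mul_five_sq_mul_eleven_sq :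
    (3 ^ 4 * 5 ^ 2 * 11 ^ 2).Abundant := by
  rw [Nat.abundant_iff_sum_divisors, ← sigma_one_apply,
    isMultiplicative_sigma.map_mul_of_coprime (by norm_num),
    isMultiplicative_sigma.map_mul_of_coprime (by norm_num),
    sigma_one_apply_prime_pow Nat.prime_three, sigma_one_apply_prime_pow Nat.prime_five,
    sigma_one_apply_prime_pow (by norm_num)]
  norm_num [sum_range_succ]

theorem abundant_three_sq_mul_five_sq_mul_eleven_sq_mul_thirteen :
    (3 ^ 2 * 5 ^ 2 * 11 ^ 2 * 13).Abundant := by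
  rw [Nat.abundant_iff_sum_divisors, ← sigma_one_apply,
    isMultiplicative_sigma.map_mul_of_coprime (by norm_num),
    isMultiplicative_sigma.map_mul_of_coprime (by norm_num),
    isMultiplicative_sigma.map_mul_of_coprime (by norm_num),
    sigma_one_apply_prime_pow Nat.prime_three, sigma_one_apply_prime_pow Nat.prime_five,
    sigma_one_apply_prime_pow (by norm_num), sigma_one_apply 13]
  norm_num [sum_range_succ]

theorem dvd_of_dvd_add_one_of_perfect {q e m p : ℕ} (hq : q.Prime) (he : Odd e)
    (hqm : q.Coprime m) (hperf : (q ^ e * m ^ 2).Perfect) (hp : p.Prime) (hp2 : p ≠ 2)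
    (hpq : p ∣ q + 1) : p ∣ m := by
  have hpn : p ∣ q ^ e * m ^ 2 :=
    hperf.dvd_of_dvd_sigma_one (hp.odd_of_ne_two hp2) <| hpq.trans <|
      (add_one_dvd_sigma_one_prime_pow hq he).trans (sigma_one_dvd_sigma_one_mul (hqm.pow e 2))
  have hp_not_dvd_q : ¬ p ∣ q := fun h ↦
    hp.one_lt.ne' <| Nat.dvd_one.mp <| (Nat.dvd_add_right h).mp hpq
  rcases (Nat.Prime.dvd_mul hp).mp hpn with h | h
  · exact absurd (hp.dvd_of_dvd_pow h) hp_not_dvd_q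
  · exact hp.dvd_of_dvd_pow h

theorem pow_four_dvd_or_sigma_one_sq_dvd_of_perfect {q e m p : ℕ} (hqm : q.Coprime m)
    (hperf : (q ^ e * m ^ 2).Perfect) (hp : p.Prime) (hpm : p ∣ m) :
    p ^ 4 ∣ q ^ e * m ^ 2 ∨ σ 1 (p ^ 2) ∣ q ^ e * m ^ 2 := by
  by_cases hp2m : p ^ 2 ∣ m
  · left
    exact dvd_mul_of_dvd_right (by simpa [← pow_mul] using pow_dvd_pow_of_dvd hp2m 2) _
  · right
    obtain ⟨k, rfl⟩ := hpm
    have hpk : ¬ p ∣ k := fun h ↦ hp2m (by rw [sq]; exact mul_dvd_mul_left p h)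
    have hpq : p.Coprime q := (hqm.coprime_dvd_right (dvd_mul_right p k)).symm
    have hsplit : q ^ e * (p * k) ^ 2 = p ^ 2 * (q ^ e * k ^ 2) := by ring
    have hcop : (p ^ 2).Coprime (q ^ e * k ^ 2) :=
      Nat.Coprime.mul_right (hpq.pow 2 e) ((hp.coprime_iff_not_dvd.mpr hpk).pow 2 2)
    refine hperf.dvd_of_dvd_sigma_one (odd_sigma_one_prime_sq hp) ?_
    rw [hsplit]
    exact sigma_one_dvd_sigma_one_mul hcop

theorem stmt_16 (q : ℕ) (hq : q.Prime) (hq165 : q % 165 = 164) :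
    ¬ ∃ (n m e : ℕ), Odd n ∧ Nat.Perfect n ∧ n = q ^ e * m ^ 2 ∧
      Nat.Coprime q m ∧ q % 4 = 1 ∧ e % 4 = 1 := by
  rintro ⟨n, m, e, -, hperf, rfl, hqm, -, he4⟩
  have he : Odd e := Nat.odd_iff.mpr (by omega)
  have dvd_m {p : ℕ} (hp : p.Prime) (hp2 : p ≠ 2) (hpq : p ∣ q + 1) : p ∣ m :=
    dvd_of_dvd_add_one_of_perfect hq he hqm hperf hp hp2 hpq
  have sq_dvd_n {p : ℕ} (hp : p.Prime) (hp2 : p ≠ 2) (hpq : p ∣ q + 1) :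
      p ^ 2 ∣ q ^ e * m ^ 2 :=
    dvd_mul_of_dvd_right (pow_dvd_pow_of_dvd (dvd_m hp hp2 hpq) 2) _
  have h25 := sq_dvd_n Nat.prime_five (by norm_num) (by omega)
  have h121 := sq_dvd_n (p := 11) (by norm_num) (by norm_num) (by omega)
  rcases pow_four_dvd_or_sigma_one_sq_dvd_of_perfect hqm hperf Nat.prime_three
      (dvd_m Nat.prime_three (by norm_num) (by omega)) with h81 | h13
  · refine abundant_three_pow_four_mul_five_sq_mul_eleven_sq.not_dvd_of_perfect hperf ?_
    exact Nat.Coprime.mul_dvd_of_dvd_of_dvd (by norm_num)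
      (Nat.Coprime.mul_dvd_of_dvd_of_dvd (by norm_num) h81 h25) h121
  · have h9 := sq_dvd_n Nat.prime_three (by norm_num) (by omega)
    rw [show σ 1 (3 ^ 2) = 13 by rw [sigma_one_apply_prime_pow Nat.prime_three]; rfl] at h13
    refine abundant_three_sq_mul_five_sq_mul_eleven_sq_mul_thirteen.not_dvd_of_perfect hperf ?_
    exact Nat.Coprime.mul_dvd_of_dvd_of_dvd (by norm_num) (Nat.Coprime.mul_dvd_of_dvd_of_dvd
      (by norm_num) (Nat.Coprime.mul_dvd_of_dvd_of_dvd (by norm_num) h9 h25) h121) h13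
end

section
/- Assume n is an odd perfect number of the form n = m² q^e where q is prime, gcd(q, m) = 1, and q ≡ e ≡ 1 (mod 4). Then either e = 1, or q < 2^{1/5} · m^{2/5}. -/
open ArithmeticFunction Finset in
theorem stmt_19 (n m q e : ℕ) (hodd : Odd n) (hperf : Nat.Perfect n)
    (hq : q.Prime) (hn : n = m ^ 2 * q ^ e) (hcop : Nat.Coprime q m)
    (hq4 : q % 4 = 1) (he4 : e % 4 = 1) :
    e = 1 ∨ (q : ℝ) < (2 : ℝ) ^ ((1 : ℝ) / 5) * (m : ℝ) ^ ((2 : ℝ) / 5) := by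
  rcases eq_or_ne e 1 with he | he
  · exact Or.inl he
  right
  have hn0 : 0 < n := hperf.2
  have hm0 : 0 < m := by
    rcases Nat.eq_zero_or_pos m with h | h
    · simp [hn, h] at hn0
    · exact h
  have he5 : 5 ≤ e := by omega
  have hq1 : 1 < q := hq.one_lt
  -- the sum of divisors equation
  have hsum : (∑ d ∈ (m ^ 2).divisors, d) * (∑ d ∈ (q ^ e).divisors, d)
      = 2 * (m ^ 2 * q ^ e) := by
    rw [← Nat.Coprime.sum_divisors_mul ((hcop.symm.pow_left 2).pow_right e), ← hn,
      (Nat.perfect_iff_sum_divisors_eq_two_mul hn0).mp hperf, hn]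
  set S := ∑ d ∈ (q ^ e).divisors, d with hS
  have hSval : S = ∑ k ∈ range (e + 1), q ^ k := by
    rw [hS, ← sigma_one_apply, sigma_one_apply_prime_pow hq]
  have hSform : S = 1 + q * ∑ k ∈ range e, q ^ k := by
    rw [hSval, Finset.sum_range_succ']
    simp [Finset.mul_sum, pow_succ, mul_comm, add_comm]
  have hcopS : Nat.Coprime q S := by
    rw [hSform]
    exact (Nat.coprime_add_mul_left_right q 1 _).mpr (Nat.coprime_one_right q)
  -- S divides 2 * m ^ 2
  have hdvd : S ∣ 2 * m ^ 2 := by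
    have h1 : S ∣ (2 * m ^ 2) * q ^ e := by
      exact ⟨∑ d ∈ (m ^ 2).divisors, d, by rw [mul_comm S, hsum]; ring⟩
    exact (Nat.Coprime.pow_right e hcopS.symm).dvd_of_dvd_mul_right h1
  have hSle : S ≤ 2 * m ^ 2 := Nat.le_of_dvd (by positivity) hdvd
  -- q ^ e < S
  have hqe_lt : q ^ e < S := by
    rw [hSval, Finset.sum_range_succ]
    have : 0 < ∑ k ∈ range e, q ^ k := by
      refine Finset.sum_pos (fun k _ => pow_pos (by omega) k) ?_
      exact Finset.nonempty_range_iff.mpr (by omega)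
    omega
  have h5 : q ^ 5 < 2 * m ^ 2 := by
    calc q ^ 5 ≤ q ^ e := Nat.pow_le_pow_right (by omega) he5
      _ < S := hqe_lt
      _ ≤ 2 * m ^ 2 := hSle
  -- now go to the reals
  have hcast : ((q : ℝ)) ^ 5 < 2 * (m : ℝ) ^ 2 := by
    have := (Nat.cast_lt (α := ℝ)).mpr h5
    push_cast at this
    linarith
  have hrp := Real.rpow_lt_rpow (by positivity) hcast (by norm_num : (0:ℝ) < 1/5)
  have hL : (((q : ℝ)) ^ 5) ^ ((1:ℝ)/5) = (q : ℝ) := by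
    rw [← Real.rpow_natCast (q : ℝ) 5, ← Real.rpow_mul (Nat.cast_nonneg q)]
    norm_num
  have hR : ((2 : ℝ) * (m : ℝ) ^ 2) ^ ((1:ℝ)/5)
      = (2 : ℝ) ^ ((1:ℝ)/5) * (m : ℝ) ^ ((2:ℝ)/5) := by
    rw [Real.mul_rpow (by norm_num) (by positivity),
      ← Real.rpow_natCast (m : ℝ) 2, ← Real.rpow_mul (Nat.cast_nonneg m)]
    norm_num
  rw [hL, hR] at hrp
  exact hrp
end
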